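/- arXiv:2502.08852 — 4 statements merged into one kernel-verified Lean document; each statement's English description precedes it below -/
import Mathlib

section
/- Let α, β, M > 0, fix γ > max{1, (1/M)√(α³/β)}, and set a₂ = γ√(α/β) and C₂ = (γ² − 1) α a₂². Let v ∈ ℝ with |v| > a₂ and let u = 0 if |v| ≥ 2a₂ and u = −M (v/|v|)(2 − |v|/a₂) if a₂ < |v| < 2a₂. Then u·v ≤ 0 and (α − β v²) v² + u·v < −C₂. -/
/-- Estimate on the set `I₂` (large velocities): with the feedback control of the
paper, `u·v ≤ 0` and `(α − βv²)v² + u·v < −C₂` where `C₂ = (γ² − 1)α a₂²`. -/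
theorem I2_estimate (α β M γ : ℝ) (hα : 0 < α) (hβ : 0 < β) (hM : 0 < M)
    (hγ : max 1 (1 / M * Real.sqrt (α ^ 3 / β)) < γ)
    (a₂ C₂ : ℝ) (ha₂ : a₂ = γ * Real.sqrt (α / β))
    (hC₂ : C₂ = (γ ^ 2 - 1) * α * a₂ ^ 2)
    (v u : ℝ) (hv : a₂ < |v|)
    (hu₁ : 2 * a₂ ≤ |v| → u = 0)
    (hu₂ : |v| < 2 * a₂ → u = -M * (v / |v|) * (2 - |v| / a₂)) :
    u * v ≤ 0 ∧ (α - β * v ^ 2) * v ^ 2 + u * v < -C₂ := by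
  have hγ1 : 1 < γ := lt_of_le_of_lt (le_max_left _ _) hγ
  have hab : 0 < α / β := div_pos hα hβ
  have hs : 0 < Real.sqrt (α / β) := Real.sqrt_pos.2 hab
  have ha2 : 0 < a₂ := by rw [ha₂]; positivity
  have ha2sq : β * a₂ ^ 2 = γ ^ 2 * α := by
    rw [ha₂, mul_pow, Real.sq_sqrt hab.le]
    field_simp
  have hv0 : 0 < |v| := lt_trans ha2 hv
  have hvne : v ≠ 0 := by simpa using hv0.ne'
  have huv : u * v ≤ 0 := by
    rcases le_or_gt (2 * a₂) |v| with h | h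
    · rw [hu₁ h]; simp
    · rw [hu₂ h]
      have h1 : 0 ≤ 2 - |v| / a₂ := by
        rw [sub_nonneg, div_le_iff₀ ha2]; linarith
      have heq : -M * (v / |v|) * (2 - |v| / a₂) * v
          = -(M * (v ^ 2 / |v|) * (2 - |v| / a₂)) := by ring
      rw [heq, neg_nonpos]
      positivity
  refine ⟨huv, ?_⟩
  have hvsq : a₂ ^ 2 < v ^ 2 := by
    have := mul_self_lt_mul_self ha2.le hv
    nlinarith [sq_abs v, this]
  have hvpos : 0 < v ^ 2 := by positivity
  nlinarith [mul_pos (sub_pos.2 hvsq) hvpos, mul_pos (sub_pos.2 hvsq) hα,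
    mul_pos (mul_pos (sub_pos.2 hvsq) hvpos) hβ, sq_nonneg (γ - 1)]
end

section
/- Assume M > (2/(3√3))√(α³/β) and let (x_l, v_l) be a solution of the controlled discrete Klein–Gordon system with the feedback control u_l(t) = u(v_l(t)). For each t, let I₂(t) = {l : |v_l(t)| > a₂}, I₁(t) = {l : a₁ ≤ |v_l(t)| ≤ a₂}, I₀(t) = {l : |v_l(t)| < a₁}, and set C₂ = (γ² − 1) α a₂², C₁ = a₁(M − (2/(3√3))√(α³/β)). Then the Lyapunov function V(t) = (1/2) Σ_{l∈Λ̄} [v_l(t)² + (1/2) Σ_{l'∼l} (x_{l'}(t) − x_l(t))²/h²] satisfies V'(t) ≤ Σ_{l∈I₂(t)} (−C₂) + Σ_{l∈I₁(t)} (−C₁) + Σ_{l∈I₀(t)} (−β v_l(t)⁴) ≤ 0 for all t; in particular V is nonincreasing. -/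
open Finset Filter

/-- The discrete torus `(ℤ/Dℤ)^n`. -/
abbrev Site (D n : ℕ) : Type := Fin n → ZMod D

/-- Sum over the `2n` neighbors `l ± e_k` of a site `l`. -/
noncomputable def nbrSum {D n : ℕ} (g : Site D n → ℝ) (l : Site D n) : ℝ :=
  ∑ k : Fin n, (g (Function.update l k (l k + 1)) + g (Function.update l k (l k - 1)))

/-- The discrete Laplacian `Δ_D f(l) = Σ_{l'∼l} (f(l') − f(l))/h²` with `h = 1/D`. -/
noncomputable def lap {D n : ℕ} (f : Site D n → ℝ) (l : Site D n) : ℝ :=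
  nbrSum (fun l' => (f l' - f l) / ((1 : ℝ) / (D : ℝ)) ^ 2) l


/-- The feedback control of the paper (equation (2.3)). -/
noncomputable def fb (M a₁ a₂ : ℝ) (v : ℝ) : ℝ :=
  if 2 * a₂ ≤ |v| then 0
  else if a₂ < |v| then -M * (v / |v|) * (2 - |v| / a₂)
  else if a₁ ≤ |v| then -M * (v / |v|)
  else -M * (v / a₁)

/-!
Along the flow, `V' = Σ_l v_l v̇_l + (derivative of the gradient energy)`. Summation by parts on
the torus (each shift `l ↦ l + e_k` is a bijection of the sites) shows that `Σ_l v_l Δ_D x_l`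
cancels the derivative of the gradient energy exactly, so
`V' = Σ_l v_l ((α - β v_l²) v_l + u(v_l))`.
Each summand is bounded according to the size of `|v_l|`: above `a₂` the cubic damping wins because
`β a₂² = γ² α`; between `a₁` and `a₂` the control contributes `-M |v_l|` while
`α s - β s³ ≤ (2/(3√3)) √(α³/β)` for `s ≥ 0`; below `a₁` the linear control `-M v / a₁` absorbs
the linear growth because `α a₁ < M`.
-/

theorem Equiv.Perm.sum_mul_sub_add_sub_symm {ι : Type*} [Fintype ι] (σ : Equiv.Perm ι)
    (f g : ι → ℝ) :
    ∑ i, f i * ((g (σ i) - g i) + (g (σ.symm i) - g i)) =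
      -((1 / 2) * ∑ i, ((f (σ i) - f i) * (g (σ i) - g i)
        + (f (σ.symm i) - f i) * (g (σ.symm i) - g i))) := by
  have reindex (F : ι → ι → ℝ) : ∑ i, F (σ.symm i) i = ∑ i, F i (σ i) := by
    rw [← Equiv.sum_comp σ]; simp only [Equiv.symm_apply_apply]
  calc ∑ i, f i * ((g (σ i) - g i) + (g (σ.symm i) - g i))
      = ∑ i, f i * (g (σ i) - g i) + ∑ i, f i * (g (σ.symm i) - g i) := by
        rw [← sum_add_distrib]; simp only [mul_add]
    _ = ∑ i, (f i * (g (σ i) - g i) + f (σ i) * (g i - g (σ i))) := by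
        rw [reindex fun j i => f i * (g j - g i), ← sum_add_distrib]
    _ = _ := by
        conv_rhs => rw [sum_add_distrib, reindex fun j i => (f j - f i) * (g j - g i),
          ← sum_add_distrib, mul_sum, ← sum_neg_distrib]
        exact sum_congr rfl fun i _ => by ring

section Lattice

variable {D n : ℕ}

def latticeShift (k : Fin n) : Equiv.Perm (Site D n) :=
  Equiv.addRight (Pi.single k 1)

lemma nbrSum_eq_sum_latticeShift (g : Site D n → ℝ) (l : Site D n) :
    nbrSum g l = ∑ k, (g (latticeShift k l) + g ((latticeShift k).symm l)) := by
  have update_eq (k : Fin n) (a : ZMod D) :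
      Function.update l k (l k + a) = l + Pi.single k a := by
    ext j; by_cases h : j = k <;> simp [h]
  simp only [nbrSum, sub_eq_add_neg, update_eq, latticeShift, Equiv.coe_addRight,
    Equiv.addRight_symm_apply, Pi.single_neg]

theorem sum_mul_lap [NeZero D] (f g : Site D n → ℝ) :
    ∑ l, f l * lap g l =
      -((1 / 2) * ∑ l, nbrSum (fun l' => (f l' - f l) * (g l' - g l) / ((1 : ℝ) / D) ^ 2) l) := by
  set c : ℝ := ((1 : ℝ) / D) ^ 2
  have hL : ∑ l, f l * lap g l = ∑ k, (∑ l, f l * ((g (latticeShift k l) - g l)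
      + (g ((latticeShift k).symm l) - g l))) / c := by
    simp only [lap, nbrSum_eq_sum_latticeShift, mul_sum, sum_div]
    rw [sum_comm]
    exact sum_congr rfl fun k _ => sum_congr rfl fun l _ => by ring
  have hR : ∑ l, nbrSum (fun l' => (f l' - f l) * (g l' - g l) / c) l =
      ∑ k, (∑ l, ((f (latticeShift k l) - f l) * (g (latticeShift k l) - g l)
        + (f ((latticeShift k).symm l) - f l) * (g ((latticeShift k).symm l) - g l))) / c := by
    simp only [nbrSum_eq_sum_latticeShift, sum_div]
    rw [sum_comm]
    exact sum_congr rfl fun k _ => sum_congr rfl fun l _ => by ring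
  rw [hL, hR, mul_sum, ← sum_neg_distrib]
  exact sum_congr rfl fun k _ => by rw [Equiv.Perm.sum_mul_sub_add_sub_symm]; ring

lemma nbrSum_const_mul (a : ℝ) (g : Site D n → ℝ) (l : Site D n) :
    nbrSum (fun l' => a * g l') l = a * nbrSum g l := by
  simp only [nbrSum, mul_sum, mul_add]

lemma hasDerivAt_nbrSum {G : ℝ → Site D n → ℝ} {G' : Site D n → ℝ} {t : ℝ}
    (l : Site D n) (h : ∀ l', HasDerivAt (fun s => G s l') (G' l') t) :
    HasDerivAt (fun s => nbrSum (G s) l) (nbrSum G' l) t :=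
  HasDerivAt.fun_sum fun _ _ => (h _).add (h _)

noncomputable def lyapunov [NeZero D] (x v : Site D n → ℝ → ℝ) (s : ℝ) : ℝ :=
  (1 / 2) * ∑ l : Site D n,
    ((v l s) ^ 2 + (1 / 2) * nbrSum (fun l' => (x l' s - x l s) ^ 2 / ((1 : ℝ) / (D : ℝ)) ^ 2) l)

theorem hasDerivAt_lyapunov [NeZero D] (x v w : Site D n → ℝ → ℝ)
    (hx : ∀ l t, HasDerivAt (x l) (v l t) t)
    (hv : ∀ l t, HasDerivAt (v l) (lap (fun l' => x l' t) l + w l t) t) (t : ℝ) :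
    HasDerivAt (lyapunov x v) (∑ l, v l t * w l t) t := by
  set c : ℝ := ((1 : ℝ) / D) ^ 2
  set F : Site D n → Site D n → ℝ := fun l l' => (v l' t - v l t) * (x l' t - x l t) / c
  have h : HasDerivAt (lyapunov x v) ((1 / 2) * ∑ l, (2 * v l t * (lap (fun l' => x l' t) l
      + w l t) + (1 / 2) * nbrSum (fun l' => 2 * F l l') l)) t := by
    refine (HasDerivAt.fun_sum fun l _ => ?_).const_mul _
    refine HasDerivAt.fun_add ?_ ((hasDerivAt_nbrSum l fun l' => ?_).const_mul _)
    · exact ((hv l t).fun_pow 2).congr_deriv (by push_cast; ring)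
    · exact ((((hx l' t).fun_sub (hx l t)).fun_pow 2).div_const c).congr_deriv
        (by simp only [F]; push_cast; ring)
  refine h.congr_deriv ?_
  calc (1 / 2) * ∑ l, (2 * v l t * (lap (fun l' => x l' t) l + w l t)
        + (1 / 2) * nbrSum (fun l' => 2 * F l l') l)
      = ∑ l, v l t * w l t + (∑ l, v l t * lap (fun l' => x l' t) l
          + (1 / 2) * ∑ l, nbrSum (F l) l) := by
        simp only [nbrSum_const_mul, mul_sum, ← sum_add_distrib]
        exact sum_congr rfl fun l _ => by ring
    _ = ∑ l, v l t * w l t := by rw [sum_mul_lap]; simp only [F, c]; ring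

end Lattice

lemma mul_div_abs_self (v : ℝ) : v * (v / |v|) = |v| := by
  rw [← mul_div_assoc, ← abs_mul_abs_self, mul_self_div_self]

section Feedback

variable {α β M a₁ a₂ : ℝ}

lemma mul_fb_nonpos (hM : 0 ≤ M) (ha₁ : 0 ≤ a₁) (v : ℝ) :
    v * fb M a₁ a₂ v ≤ 0 := by
  unfold fb
  split_ifs with h₂ h₁
  · simp
  · have : 0 ≤ 2 - |v| / a₂ := by
      rw [sub_nonneg, div_le_iff₀ (by linarith [abs_nonneg v])]; linarith
    rw [show v * (-M * (v / |v|) * (2 - |v| / a₂)) = -(M * (v * (v / |v|)) * (2 - |v| / a₂)) by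
      ring, mul_div_abs_self, neg_nonpos]
    positivity
  · rw [show v * (-M * (v / |v|)) = -(M * (v * (v / |v|))) by ring, mul_div_abs_self, neg_nonpos]
    positivity
  · rw [show v * (-M * (v / a₁)) = -(M * v ^ 2 / a₁) by ring, neg_nonpos]
    positivity

lemma sqrt_pow_three_div (hα : 0 ≤ α) : √(α ^ 3 / β) = α * √(α / β) := by
  rw [show α ^ 3 / β = α ^ 2 * (α / β) by ring, Real.sqrt_mul (sq_nonneg α), Real.sqrt_sq hα]

lemma mul_sub_mul_pow_three_le (hα : 0 < α) (hβ : 0 < β) {s : ℝ} (hs : 0 ≤ s) :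
    α * s - β * s ^ 3 ≤ 2 / (3 * √3) * √(α ^ 3 / β) := by
  -- `s₀ = √(α / (3β))` is the maximiser, and `β s³ - α s + (2α/3) s₀ = β (s - s₀)² (s + 2 s₀)`.
  set s₀ := √(α / β) / √3
  have hs₀ : 0 ≤ s₀ := by positivity
  have hs₀sq : 3 * β * s₀ ^ 2 = α := by
    rw [div_pow, Real.sq_sqrt (by positivity), Real.sq_sqrt (by norm_num)]; field_simp
  have hK : 2 / (3 * √3) * √(α ^ 3 / β) = 2 * α / 3 * s₀ := by
    rw [sqrt_pow_three_div hα.le]; ring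
  have key : 0 ≤ β * (s - s₀) ^ 2 * (s + 2 * s₀) := by positivity
  rw [hK]
  linear_combination key + (2 / 3 * s₀ - s) * hs₀sq

lemma mul_drift_add_fb_le_of_lt_abs (hβ : 0 ≤ β) (hM : 0 ≤ M) (ha₁ : 0 ≤ a₁) (ha₂ : 0 ≤ a₂)
    (hαa₂ : α ≤ β * a₂ ^ 2) {v : ℝ} (hv : a₂ < |v|) :
    v * ((α - β * v ^ 2) * v + fb M a₁ a₂ v) ≤ (α - β * a₂ ^ 2) * a₂ ^ 2 := by
  have hfb := mul_fb_nonpos (a₂ := a₂) hM ha₁ v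
  have hsq : a₂ ^ 2 ≤ v ^ 2 := sq_abs v ▸ pow_le_pow_left₀ ha₂ hv.le 2
  nlinarith [mul_nonneg (sub_nonneg.2 hsq)
    (add_nonneg (sub_nonneg.2 hαa₂) (mul_nonneg hβ (sq_nonneg v)))]

lemma mul_drift_add_fb_le_of_abs_mem_Icc (hα : 0 < α) (hβ : 0 < β)
    (hM : 2 / (3 * √3) * √(α ^ 3 / β) ≤ M) (ha₁ : 0 < a₁) {v : ℝ} (hv₁ : a₁ ≤ |v|)
    (hv₂ : |v| ≤ a₂) :
    v * ((α - β * v ^ 2) * v + fb M a₁ a₂ v) ≤ a₁ * (2 / (3 * √3) * √(α ^ 3 / β) - M) := by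
  have hfb : v * fb M a₁ a₂ v = -(M * |v|) := by
    rw [fb, if_neg (by linarith), if_neg (by linarith), if_pos hv₁, mul_comm (-M), ← mul_assoc,
      mul_div_abs_self, mul_neg, mul_comm]
  have hcubic := mul_sub_mul_pow_three_le hα hβ (abs_nonneg v)
  have hdrift : v * ((α - β * v ^ 2) * v) = |v| * (α * |v| - β * |v| ^ 3) := by
    rw [show |v| * (α * |v| - β * |v| ^ 3) = α * |v| ^ 2 - β * (|v| ^ 2) ^ 2 by ring, sq_abs]
    ring
  rw [mul_add, hfb, hdrift]
  nlinarith [mul_le_mul_of_nonneg_left hcubic (abs_nonneg v)]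

lemma mul_drift_add_fb_le_of_abs_lt (ha₁ : 0 < a₁) (ha₁₂ : a₁ ≤ a₂)
    (hαa₁ : α * a₁ ≤ M) {v : ℝ} (hv : |v| < a₁) :
    v * ((α - β * v ^ 2) * v + fb M a₁ a₂ v) ≤ -(β * v ^ 4) := by
  rw [fb, if_neg (by linarith), if_neg (by linarith), if_neg (by linarith)]
  have : α * v ^ 2 ≤ M * v ^ 2 / a₁ := by
    rw [le_div_iff₀ ha₁]; nlinarith [sq_nonneg v]
  have key : v * ((α - β * v ^ 2) * v + -M * (v / a₁)) =
      α * v ^ 2 - M * v ^ 2 / a₁ - β * v ^ 4 := by ring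
  linarith

noncomputable def dissipationBound (β a₁ a₂ C₁ C₂ v : ℝ) : ℝ :=
  (if a₂ < |v| then -C₂ else 0) + (if a₁ ≤ |v| ∧ |v| ≤ a₂ then -C₁ else 0)
    + (if |v| < a₁ then -(β * v ^ 4) else 0)

lemma mul_drift_add_fb_le_dissipationBound {C₁ C₂ : ℝ} (hα : 0 < α) (hβ : 0 < β)
    (hM : 2 / (3 * √3) * √(α ^ 3 / β) ≤ M) (ha₁ : 0 < a₁) (ha₁₂ : a₁ ≤ a₂) (hαa₁ : α * a₁ ≤ M)
    (hαa₂ : α ≤ β * a₂ ^ 2) (hC₁ : C₁ ≤ a₁ * (M - 2 / (3 * √3) * √(α ^ 3 / β)))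
    (hC₂ : C₂ ≤ (β * a₂ ^ 2 - α) * a₂ ^ 2) (v : ℝ) :
    v * ((α - β * v ^ 2) * v + fb M a₁ a₂ v) ≤ dissipationBound β a₁ a₂ C₁ C₂ v := by
  have hM₀ : 0 ≤ M := (by positivity : (0 : ℝ) ≤ 2 / (3 * √3) * √(α ^ 3 / β)).trans hM
  rcases lt_or_ge a₂ |v| with h₂ | h₂
  · have := mul_drift_add_fb_le_of_lt_abs hβ.le hM₀ ha₁.le (ha₁.le.trans ha₁₂) hαa₂ h₂
    simp only [dissipationBound, if_pos h₂, if_neg (not_and_of_not_right _ h₂.not_ge),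
      if_neg (by linarith : ¬|v| < a₁)]
    linarith
  rcases le_or_gt a₁ |v| with h₁ | h₁
  · have := mul_drift_add_fb_le_of_abs_mem_Icc hα hβ hM ha₁ h₁ h₂
    simp only [dissipationBound, if_neg h₂.not_gt, if_pos (And.intro h₁ h₂), if_neg h₁.not_gt]
    linarith
  · have := mul_drift_add_fb_le_of_abs_lt (β := β) ha₁ ha₁₂ hαa₁ h₁
    simp only [dissipationBound, if_neg h₂.not_gt, if_neg (not_and_of_not_left _ h₁.not_ge),
      if_pos h₁]
    linarith

lemma dissipationBound_nonpos {C₁ C₂ : ℝ} (hβ : 0 ≤ β) (hC₁ : 0 ≤ C₁) (hC₂ : 0 ≤ C₂) (v : ℝ) :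
    dissipationBound β a₁ a₂ C₁ C₂ v ≤ 0 := by
  have : 0 ≤ β * v ^ 4 := by positivity
  unfold dissipationBound
  split_ifs <;> linarith

end Feedback

theorem lyapunov_decreasing_general (D n : ℕ) [NeZero D]
    (α β M γ : ℝ) (hα : 0 < α) (hβ : 0 < β)
    (hM : 2 / (3 * Real.sqrt 3) * Real.sqrt (α ^ 3 / β) < M)
    (hγ : max 1 (1 / M * Real.sqrt (α ^ 3 / β)) < γ)
    (a₁ a₂ C₁ C₂ : ℝ)
    (ha₁ : a₁ = γ⁻¹ * Real.sqrt (α / β)) (ha₂ : a₂ = γ * Real.sqrt (α / β))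
    (hC₁ : C₁ = a₁ * (M - 2 / (3 * Real.sqrt 3) * Real.sqrt (α ^ 3 / β)))
    (hC₂ : C₂ = (γ ^ 2 - 1) * α * a₂ ^ 2)
    (x v : Site D n → ℝ → ℝ)
    (hx : ∀ l t, HasDerivAt (x l) (v l t) t)
    (hv : ∀ l t, HasDerivAt (v l)
      (lap (fun l' => x l' t) l + (α - β * (v l t) ^ 2) * v l t + fb M a₁ a₂ (v l t)) t) :
    ∀ t : ℝ, ∃ d S : ℝ,
      S = (∑ l ∈ Finset.univ.filter (fun l : Site D n => a₂ < |v l t|), -C₂)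
        + (∑ l ∈ Finset.univ.filter (fun l : Site D n => a₁ ≤ |v l t| ∧ |v l t| ≤ a₂), -C₁)
        + (∑ l ∈ Finset.univ.filter (fun l : Site D n => |v l t| < a₁), -(β * (v l t) ^ 4)) ∧
      HasDerivAt
        (fun s => (1 / 2) * ∑ l : Site D n,
          ((v l s) ^ 2 +
            (1 / 2) * nbrSum (fun l' => (x l' s - x l s) ^ 2 / ((1 : ℝ) / (D : ℝ)) ^ 2) l))
        d t ∧
      d ≤ S ∧ S ≤ 0 := by
  intro t
  have hγ₁ : 1 < γ := (le_max_left _ _).trans_lt hγ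
  have hγ₀ : 0 < γ := one_pos.trans hγ₁
  have hM₀ : 0 < M := lt_of_le_of_lt (by positivity) hM
  have ha₁₀ : 0 < a₁ := ha₁ ▸ by positivity
  have ha₁₂ : a₁ ≤ a₂ := by
    rw [ha₁, ha₂]; gcongr; exact (inv_lt_one_of_one_lt₀ hγ₁).le.trans hγ₁.le
  have hαa₁ : α * a₁ ≤ M := by
    have h := (le_max_right _ _).trans_lt hγ
    rw [one_div_mul_eq_div, div_lt_iff₀ hM₀, sqrt_pow_three_div hα.le] at h
    rw [ha₁, ← mul_le_mul_iff_of_pos_left hγ₀]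
    field_simp
    linarith
  have hβa₂ : β * a₂ ^ 2 = γ ^ 2 * α := by
    rw [ha₂, mul_pow, Real.sq_sqrt (by positivity)]; field_simp
  have hαa₂ : α ≤ β * a₂ ^ 2 := hβa₂ ▸ le_mul_of_one_le_left hα.le (one_le_pow₀ hγ₁.le)
  have hC₂' : C₂ = (β * a₂ ^ 2 - α) * a₂ ^ 2 := by rw [hC₂, hβa₂]; ring
  refine ⟨_, _, rfl, hasDerivAt_lyapunov x v
    (fun l s => (α - β * v l s ^ 2) * v l s + fb M a₁ a₂ (v l s)) hx
    (fun l s => by simpa only [add_assoc] using hv l s) t, ?_, ?_⟩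
    <;> simp only [sum_filter, ← sum_add_distrib]
  · exact sum_le_sum fun l _ => mul_drift_add_fb_le_dissipationBound hα hβ hM.le ha₁₀ ha₁₂ hαa₁
      hαa₂ hC₁.le hC₂'.le (v l t)
  · exact sum_nonpos fun l _ => dissipationBound_nonpos hβ.le
      (hC₁ ▸ mul_nonneg ha₁₀.le (sub_nonneg.2 hM.le))
      (hC₂' ▸ mul_nonneg (sub_nonneg.2 hαa₂) (sq_nonneg _)) (v l t)

/-- Along the feedback control, the Lyapunov function satisfies
`V'(t) ≤ Σ_{I₂} (−C₂) + Σ_{I₁} (−C₁) + Σ_{I₀} (−β v_l⁴) ≤ 0`;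
in particular `V` is nonincreasing. -/
theorem lyapunov_decreasing (D n : ℕ) [NeZero D] (hn : 1 ≤ n)
    (α β M γ : ℝ) (hα : 0 < α) (hβ : 0 < β)
    (hM : 2 / (3 * Real.sqrt 3) * Real.sqrt (α ^ 3 / β) < M)
    (hγ : max 1 (1 / M * Real.sqrt (α ^ 3 / β)) < γ)
    (a₁ a₂ C₁ C₂ : ℝ)
    (ha₁ : a₁ = γ⁻¹ * Real.sqrt (α / β)) (ha₂ : a₂ = γ * Real.sqrt (α / β))
    (hC₁ : C₁ = a₁ * (M - 2 / (3 * Real.sqrt 3) * Real.sqrt (α ^ 3 / β)))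
    (hC₂ : C₂ = (γ ^ 2 - 1) * α * a₂ ^ 2)
    (x v : Site D n → ℝ → ℝ)
    (hx : ∀ l t, HasDerivAt (x l) (v l t) t)
    (hv : ∀ l t, HasDerivAt (v l)
      (lap (fun l' => x l' t) l + (α - β * (v l t) ^ 2) * v l t + fb M a₁ a₂ (v l t)) t) :
    ∀ t : ℝ, ∃ d S : ℝ,
      S = (∑ l ∈ Finset.univ.filter (fun l : Site D n => a₂ < |v l t|), -C₂)
        + (∑ l ∈ Finset.univ.filter (fun l : Site D n => a₁ ≤ |v l t| ∧ |v l t| ≤ a₂), -C₁)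
        + (∑ l ∈ Finset.univ.filter (fun l : Site D n => |v l t| < a₁), -(β * (v l t) ^ 4)) ∧
      HasDerivAt
        (fun s => (1 / 2) * ∑ l : Site D n,
          ((v l s) ^ 2 +
            (1 / 2) * nbrSum (fun l' => (x l' s - x l s) ^ 2 / ((1 : ℝ) / (D : ℝ)) ^ 2) l))
        d t ∧
      d ≤ S ∧ S ≤ 0 :=
  lyapunov_decreasing_general D n α β M γ hα hβ hM hγ a₁ a₂ C₁ C₂ ha₁ ha₂ hC₁ hC₂ x v hx hv
end

section
/- Let 0 < ε < min{1, M/(2n + 1 + 8n/h² + 2α + 8β)}. Suppose at time T₀ the state (x_l(T₀), v_l(T₀)) satisfies |v_l(T₀)| < ε and |Δ_D x(·,T₀)(l)| < ε for all l ∈ Λ̄. For each l set T_{1,l} = T₀ + |v_l(T₀)|/ε and T₁ = max_l T_{1,l}, and define v_l(t) = v_l(T₀) − ε(t − T₀) v_l(T₀)/|v_l(T₀)| for t ∈ [T₀, T_{1,l}] and v_l(t) = 0 for t ∈ (T_{1,l}, T₁], x_l(t) = x_l(T₀) + ∫_{T₀}^t v_l(s) ds, and u_l(t) = v̇_l(t)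 − Δ_D x(·,t)(l) − (α − β v_l(t)²) v_l(t). Then (x_l, v_l, u_l) solves the controlled discrete Klein–Gordon system on (T₀, T₁], v_l(T₁) = 0 for all l, and the control is admissible with strict bound: |u_l(t)| ≤ ε(2n + 1 + 8n/h² + 2α + 8β ε²) < M for all l and t ∈ (T₀, T₁]. -/
open Finset Filter

/-!
Each velocity is brought to rest at constant deceleration `ε`, which takes time `|v_l(T₀)|/ε < 1`;
so velocities stay below `ε` and positions move by at most `ε`. The discrete Laplacian of the
position increments is then at most `2n · 2ε/h²`, and the control, being the residual of the
equation, is bounded term by term.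
-/

section Lattice

variable {D n : ℕ}

lemma lap_add (f g : Site D n → ℝ) (l : Site D n) :
    lap (fun l' => f l' + g l') l = lap f l + lap g l := by
  simp only [lap, nbrSum, ← Finset.sum_add_distrib]
  exact Finset.sum_congr rfl fun k _ => by ring

lemma abs_nbrSum_le {g : Site D n → ℝ} {C : ℝ} (hg : ∀ l', |g l'| ≤ C) (l : Site D n) :
    |nbrSum g l| ≤ 2 * n * C := by
  calc |nbrSum g l|
      ≤ ∑ k : Fin n, (|g (Function.update l k (l k + 1))| + |g (Function.update l k (l k - 1))|) :=
        (Finset.abs_sum_le_sum_abs _ _).trans (Finset.sum_le_sum fun k _ => abs_add_le _ _)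
    _ ≤ ∑ _k : Fin n, (C + C) := Finset.sum_le_sum fun k _ => add_le_add (hg _) (hg _)
    _ = 2 * n * C := by
        simp only [Finset.sum_const, Finset.card_univ, Fintype.card_fin, nsmul_eq_mul]
        ring

lemma abs_lap_le {f : Site D n → ℝ} {C : ℝ} (hf : ∀ l', |f l'| ≤ C) (l : Site D n) :
    |lap f l| ≤ 4 * n * C / ((1 : ℝ) / D) ^ 2 := by
  have hterm : ∀ l', |(f l' - f l) / ((1 : ℝ) / D) ^ 2| ≤ 2 * C / ((1 : ℝ) / D) ^ 2 := by
    intro l'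
    rw [abs_div, abs_of_nonneg (sq_nonneg ((1 : ℝ) / D))]
    gcongr
    linarith [abs_sub (f l') (f l), hf l', hf l]
  calc |lap f l| ≤ 2 * n * (2 * C / ((1 : ℝ) / D) ^ 2) := abs_nbrSum_le hterm l
    _ = 4 * n * C / ((1 : ℝ) / D) ^ 2 := by ring

end Lattice

section Deceleration

/-- `a / |a|` is the sign of `a`; since `0 / 0 = 0`, the profile is identically `0` when `a = 0`. -/
noncomputable def decelVel (ε T₀ a t : ℝ) : ℝ :=
  if t ≤ T₀ + |a| / ε then a - ε * (t - T₀) * (a / |a|) else 0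

noncomputable def decelAcc (ε T₀ a t : ℝ) : ℝ :=
  if t ≤ T₀ + |a| / ε then -ε * (a / |a|) else 0

variable {ε T₀ : ℝ}

lemma abs_div_abs_self_le_one (a : ℝ) : abs (a / |a|) ≤ 1 := by
  rw [abs_div, abs_abs]
  exact div_self_le_one _

lemma sub_mul_div_abs_self (a s : ℝ) : a - s * (a / |a|) = a / |a| * (|a| - s) := by
  rcases eq_or_ne a 0 with rfl | ha
  · simp
  · field_simp

lemma decelVel_eq_zero_of_le (hε : ε ≠ 0) {a t : ℝ} (ht : T₀ + |a| / ε ≤ t) :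
    decelVel ε T₀ a t = 0 := by
  unfold decelVel
  split_ifs with h
  · rw [le_antisymm h ht, sub_mul_div_abs_self]
    field_simp
    ring
  · rfl

lemma continuous_decelVel (hε : ε ≠ 0) (a : ℝ) : Continuous (decelVel ε T₀ a) :=
  Continuous.if_le (by fun_prop) continuous_const continuous_id continuous_const
    fun _ ht => by simpa only [decelVel, ht, le_refl, if_true] using
      decelVel_eq_zero_of_le (T₀ := T₀) hε ht.ge

lemma abs_decelVel_le (hε : 0 < ε) {a t : ℝ} (ht : T₀ ≤ t) : |decelVel ε T₀ a t| ≤ |a| := by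
  unfold decelVel
  split_ifs with h
  · have hle : ε * (t - T₀) ≤ |a| := by
      rw [← le_div_iff₀' hε]; linarith
    have hge : 0 ≤ ε * (t - T₀) := mul_nonneg hε.le (by linarith)
    rw [sub_mul_div_abs_self, abs_mul]
    calc abs (a / |a|) * abs (|a| - ε * (t - T₀)) ≤ 1 * |a| :=
          mul_le_mul (abs_div_abs_self_le_one a) (abs_le.mpr ⟨by linarith, by linarith⟩)
            (abs_nonneg _) zero_le_one
      _ = |a| := one_mul _
  · simp

lemma abs_decelAcc_le (hε : 0 ≤ ε) (a t : ℝ) : |decelAcc ε T₀ a t| ≤ ε := by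
  unfold decelAcc
  split_ifs
  · rw [abs_mul, abs_neg, abs_of_nonneg hε]
    exact mul_le_of_le_one_right hε (abs_div_abs_self_le_one a)
  · simpa using hε

lemma hasDerivWithinAt_decelVel (ε T₀ a t : ℝ) :
    HasDerivWithinAt (decelVel ε T₀ a) (decelAcc ε T₀ a t) (Set.Iic t) t := by
  unfold decelAcc
  rcases le_or_gt t (T₀ + |a| / ε) with h | h
  · rw [if_pos h]
    have hlin : HasDerivAt (fun s : ℝ => a - ε * (s - T₀) * (a / |a|)) (-ε * (a / |a|)) t := by
      simpa using ((((hasDerivAt_id t).sub_const T₀).const_mul ε).mul_const (a / |a|)).const_sub a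
    refine hlin.hasDerivWithinAt.congr (fun s hs => ?_) ?_
    · rw [decelVel, if_pos ((Set.mem_Iic.mp hs).trans h)]
    · rw [decelVel, if_pos h]
  · rw [if_neg h.not_ge]
    refine (hasDerivWithinAt_const t _ (0 : ℝ)).congr_of_eventuallyEq ?_ ?_
    · filter_upwards [(eventually_gt_nhds h).filter_mono nhdsWithin_le_nhds] with s hs
      rw [decelVel, if_neg hs.not_ge]
    · rw [decelVel, if_neg h.not_ge]

lemma abs_integral_decelVel_le (hε : 0 < ε) {a t : ℝ} (ht₀ : T₀ ≤ t) (ht₁ : t ≤ T₀ + 1) :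
    |∫ s in T₀..t, decelVel ε T₀ a s| ≤ |a| := by
  have hbound : ∀ s ∈ Set.uIoc T₀ t, ‖decelVel ε T₀ a s‖ ≤ |a| := fun s hs =>
    abs_decelVel_le hε (Set.uIoc_of_le ht₀ ▸ hs).1.le
  calc |∫ s in T₀..t, decelVel ε T₀ a s| ≤ |a| * |t - T₀| :=
        intervalIntegral.norm_integral_le_of_norm_le_const hbound
    _ ≤ |a| * 1 := by
        gcongr
        rw [abs_le]; constructor <;> linarith
    _ = |a| := mul_one _

end Deceleration

lemma abs_control_le {n h2 α β ε w L v : ℝ} (hn : 1 ≤ n) (hh2 : 0 ≤ h2) (hα : 0 ≤ α)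
    (hβ : 0 ≤ β) (hw : |w| ≤ ε) (hL : |L| ≤ ε + 4 * n * ε / h2) (hv : |v| ≤ ε) :
    |w - L - (α - β * v ^ 2) * v| ≤ ε * (2 * n + 1 + 8 * n / h2 + 2 * α + 8 * β * ε ^ 2) := by
  have hε : 0 ≤ ε := (abs_nonneg w).trans hw
  have hv2 : v ^ 2 ≤ ε ^ 2 := sq_le_sq' (abs_le.mp hv).1 (abs_le.mp hv).2
  have hnonlin : |(α - β * v ^ 2) * v| ≤ (α + β * ε ^ 2) * ε := by
    rw [abs_mul]
    gcongr
    rw [abs_le]; constructor <;> nlinarith [sq_nonneg v]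
  have hlap : 4 * n * ε / h2 ≤ ε * (8 * n / h2) := by
    rw [mul_div_assoc']
    exact div_le_div_of_nonneg_right (by nlinarith) hh2
  have hαε : 0 ≤ α * ε := mul_nonneg hα hε
  have hβε : 0 ≤ β * ε ^ 2 * ε := by positivity
  calc |w - L - (α - β * v ^ 2) * v| ≤ |w| + |L| + |(α - β * v ^ 2) * v| :=
        (abs_sub _ _).trans (add_le_add_left (abs_sub _ _) _)
    _ ≤ ε + (ε + ε * (8 * n / h2)) + (α + β * ε ^ 2) * ε := by linarith
    _ ≤ ε * (2 * n + 1 + 8 * n / h2 + 2 * α + 8 * β * ε ^ 2) := by nlinarith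

lemma control_bound_lt {B β ε M : ℝ} (hB : 0 < B) (hβ : 0 ≤ β) (hε₀ : 0 ≤ ε) (hε₁ : ε < 1)
    (hε : ε < M / (B + 8 * β)) : ε * (B + 8 * β * ε ^ 2) < M := by
  have hε2 : ε ^ 2 ≤ 1 := by nlinarith
  calc ε * (B + 8 * β * ε ^ 2) ≤ ε * (B + 8 * β) := by
        nlinarith [mul_le_mul_of_nonneg_left (mul_le_mul_of_nonneg_left hε2 hβ) hε₀]
    _ < M := (lt_div_iff₀ (by positivity)).mp hε

theorem deceleration_stage_general (D n : ℕ) [NeZero D] (hn : 1 ≤ n)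
    (α β M : ℝ) (hα : 0 < α) (hβ : 0 < β)
    (ε T₀ : ℝ) (hε₀ : 0 < ε)
    (hε : ε < min 1
      (M / (2 * n + 1 + 8 * n / ((1 : ℝ) / (D : ℝ)) ^ 2 + 2 * α + 8 * β)))
    (X V : Site D n → ℝ)
    (hV : ∀ l, |V l| < ε) (hX : ∀ l, |lap X l| < ε) :
    let T1 : Site D n → ℝ := fun l => T₀ + |V l| / ε
    let Tmax : ℝ := Finset.univ.sup' Finset.univ_nonempty T1
    let v : Site D n → ℝ → ℝ := fun l t =>
      if t ≤ T1 l then V l - ε * (t - T₀) * (V l / |V l|) else 0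
    let x : Site D n → ℝ → ℝ := fun l t => X l + ∫ s in T₀..t, v l s
    let u : Site D n → ℝ → ℝ := fun l t =>
      (if t ≤ T1 l then -ε * (V l / |V l|) else 0)
        - lap (fun l' => x l' t) l - (α - β * (v l t) ^ 2) * v l t
    (∀ l : Site D n, ∀ t ∈ Set.Ioc T₀ Tmax,
      HasDerivWithinAt (x l) (v l t) (Set.Iic t) t ∧
      HasDerivWithinAt (v l)
        (lap (fun l' => x l' t) l + (α - β * (v l t) ^ 2) * v l t + u l t)
        (Set.Iic t) t) ∧
    (∀ l : Site D n, v l Tmax = 0) ∧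
    (∀ l : Site D n, ∀ t ∈ Set.Ioc T₀ Tmax,
      |u l t| ≤ ε * (2 * n + 1 + 8 * n / ((1 : ℝ) / (D : ℝ)) ^ 2 + 2 * α + 8 * β * ε ^ 2)) ∧
    ε * (2 * n + 1 + 8 * n / ((1 : ℝ) / (D : ℝ)) ^ 2 + 2 * α + 8 * β * ε ^ 2) < M := by
  intro T1 Tmax v x u
  have hn' : (1 : ℝ) ≤ n := by exact_mod_cast hn
  have hh2 : (0 : ℝ) ≤ ((1 : ℝ) / D) ^ 2 := sq_nonneg _
  have hT1_le : ∀ l, T1 l ≤ Tmax := fun l => Finset.le_sup' T1 (Finset.mem_univ l)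
  have hTmax : Tmax ≤ T₀ + 1 := Finset.sup'_le _ _ fun l _ => by
    have : |V l| / ε ≤ 1 := (div_le_one hε₀).mpr (hV l).le
    linarith
  have hlap : ∀ l, ∀ t ∈ Set.Ioc T₀ Tmax,
      |lap (fun l' => x l' t) l| ≤ ε + 4 * n * ε / ((1 : ℝ) / D) ^ 2 := by
    intro l t ht
    have hI : ∀ l', |∫ s in T₀..t, v l' s| ≤ ε := fun l' =>
      (abs_integral_decelVel_le hε₀ ht.1.le (ht.2.trans hTmax)).trans (hV l').le
    rw [lap_add]
    exact (abs_add_le _ _).trans (add_le_add (hX l).le (abs_lap_le hI l))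
  refine ⟨fun l t _ => ⟨?_, ?_⟩, fun l => decelVel_eq_zero_of_le hε₀.ne' (hT1_le l),
    fun l t ht => ?_, ?_⟩
  · exact (((continuous_decelVel hε₀.ne' (V l)).integral_hasStrictDerivAt T₀ t).hasDerivAt.const_add
      (X l)).hasDerivWithinAt
  · have hu : lap (fun l' => x l' t) l + (α - β * v l t ^ 2) * v l t + u l t =
        decelAcc ε T₀ (V l) t := by
      rw [show u l t = decelAcc ε T₀ (V l) t - _ - _ from rfl]
      ring
    rw [hu]
    exact hasDerivWithinAt_decelVel ε T₀ (V l) t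
  · exact abs_control_le hn' hh2 hα.le hβ.le (abs_decelAcc_le hε₀.le _ _) (hlap l t ht)
      ((abs_decelVel_le hε₀ ht.1.le).trans (hV l).le)
  · exact control_bound_lt (by positivity) hβ.le hε₀.le (hε.trans_le (min_le_left _ _))
      (hε.trans_le (min_le_right _ _))

/-- The second stage of the flocking control: starting from small velocities and
small discrete Laplacian at time `T₀`, the explicit deceleration trajectories
together with the induced forcing solve the controlled discrete Klein–Gordon
system on `(T₀, T₁]`, bring all velocities to `0` at `T₁`, and the control is
admissible with the strict bound `|u_l| ≤ ε(2n + 1 + 8n/h² + 2α + 8βε²) < M`. -/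
theorem deceleration_stage (D n : ℕ) [NeZero D] (hn : 1 ≤ n)
    (α β M : ℝ) (hα : 0 < α) (hβ : 0 < β) (hM : 0 < M)
    (ε T₀ : ℝ) (hε₀ : 0 < ε)
    (hε : ε < min 1
      (M / (2 * n + 1 + 8 * n / ((1 : ℝ) / (D : ℝ)) ^ 2 + 2 * α + 8 * β)))
    (X V : Site D n → ℝ)
    (hV : ∀ l, |V l| < ε) (hX : ∀ l, |lap X l| < ε) :
    let T1 : Site D n → ℝ := fun l => T₀ + |V l| / ε
    let Tmax : ℝ := Finset.univ.sup' Finset.univ_nonempty T1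
    let v : Site D n → ℝ → ℝ := fun l t =>
      if t ≤ T1 l then V l - ε * (t - T₀) * (V l / |V l|) else 0
    let x : Site D n → ℝ → ℝ := fun l t => X l + ∫ s in T₀..t, v l s
    let u : Site D n → ℝ → ℝ := fun l t =>
      (if t ≤ T1 l then -ε * (V l / |V l|) else 0)
        - lap (fun l' => x l' t) l - (α - β * (v l t) ^ 2) * v l t
    (∀ l : Site D n, ∀ t ∈ Set.Ioc T₀ Tmax,
      HasDerivWithinAt (x l) (v l t) (Set.Iic t) t ∧
      HasDerivWithinAt (v l)
        (lap (fun l' => x l' t) l + (α - β * (v l t) ^ 2) * v l t + u l t)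
        (Set.Iic t) t) ∧
    (∀ l : Site D n, v l Tmax = 0) ∧
    (∀ l : Site D n, ∀ t ∈ Set.Ioc T₀ Tmax,
      |u l t| ≤ ε * (2 * n + 1 + 8 * n / ((1 : ℝ) / (D : ℝ)) ^ 2 + 2 * α + 8 * β * ε ^ 2)) ∧
    ε * (2 * n + 1 + 8 * n / ((1 : ℝ) / (D : ℝ)) ^ 2 + 2 * α + 8 * β * ε ^ 2) < M :=
  deceleration_stage_general D n hn α β M hα hβ ε T₀ hε₀ hε X V hV hX
end

section
/- Assume M > (2/(3√3))√(α³/β) and let 0 < ε < M/(2n + 1 + 8n/h² + 2α + 8β). Suppose at time T₁ the state satisfies v_l(T₁) = 0 and |Δ_D x(·,T₁)(l)| ≤ ε for all l ∈ Λ̄. Set T₂ = T₁ + 2√α/(M√β) and define on [T₁, T₂] the control u_l(t) = −(α − β v_l(t)²) v_l(t) − Δ_D x(·,t)(l) + M/2. Then the resulting solution of the controlled discrete Klein–Gordon system satisfies v_l(t) = M(t − T₁)/2 for all l ∈ Λ̄ and t ∈ [T₁, T₂]; in particular v_l(T₂) = √(α/β) for all l, the differences x_{l'}(t) − x_l(t)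 are constant in t on [T₁, T₂] so |Δ_D x(·,T₂)(l)| ≤ ε, and the control is admissible: |u_l(t)| ≤ M/2 + ε < M for all l, t ∈ [T₁, T₂]. -/
open Finset Filter

/-! The control cancels the Laplacian and the friction term, so every velocity obeys `v̇ = M/2`
and grows linearly from rest, reaching `√(α/β)` exactly at `T₂`. All sites move with the same
velocity, so the differences `x_{l'} − x_l`, and with them the discrete Laplacian, stay frozen.
On `[0, √(α/β)]` the friction `(α − βv²)v` lies between `0` and its maximum
`2/(3√3)·√(α³/β) < M`, which together with `|Δ_D x| ≤ ε < M/2` bounds the control by `M/2 + ε`. -/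

theorem Convex.eq_add_smul_of_hasDerivWithinAt {E : Type*} [NormedAddCommGroup E]
    [NormedSpace ℝ E] {f : ℝ → E} {s : Set ℝ} {c : E} (hs : Convex ℝ s)
    (hf : ∀ t ∈ s, HasDerivWithinAt f c s t) {a t : ℝ} (ha : a ∈ s) (ht : t ∈ s) :
    f t = f a + (t - a) • c := by
  have hg : ∀ τ ∈ s, HasDerivWithinAt (fun τ => f τ - (τ - a) • c) 0 s τ := fun τ hτ => by
    simpa using (hf τ hτ).fun_sub (((hasDerivWithinAt_id τ s).sub_const a).smul_const c)
  have h := hs.norm_image_sub_le_of_norm_hasDerivWithin_le (C := 0) hg (fun _ _ => by simp) ha ht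
  rw [zero_mul, norm_le_zero_iff, sub_self, zero_smul, sub_zero, sub_sub, sub_eq_zero] at h
  rw [h, add_comm]

theorem mul_sub_sq_le_of_nonneg {α β w : ℝ} (hβ : 0 < β) (hw : 0 ≤ w) :
    (α - β * w ^ 2) * w ≤ 2 / (3 * Real.sqrt 3) * Real.sqrt (α ^ 3 / β) := by
  set R := 2 / (3 * Real.sqrt 3) * Real.sqrt (α ^ 3 / β)
  have hR : 0 ≤ R := by positivity
  rcases le_or_gt (α - β * w ^ 2) 0 with hneg | hpos
  · exact (mul_nonpos_of_nonpos_of_nonneg hneg hw).trans hR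
  -- with `s = β w²`, `4α³/27 - (α - s)² s = (s - α/3)² (4α/3 - s)`
  have hcubic : (α - β * w ^ 2) ^ 2 * (β * w ^ 2) ≤ 4 * α ^ 3 / 27 := by
    nlinarith [mul_nonneg (sq_nonneg (3 * (β * w ^ 2) - α))
      (by nlinarith [sq_nonneg w] : (0:ℝ) ≤ 4 * α - 3 * (β * w ^ 2))]
  have hRsq : R ^ 2 = 4 * α ^ 3 / 27 / β := by
    have hα : 0 < α := by nlinarith [sq_nonneg w]
    rw [mul_pow, div_pow, mul_pow, Real.sq_sqrt (by norm_num), Real.sq_sqrt (by positivity)]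
    ring
  refine abs_le_of_sq_le_sq' ?_ hR |>.2
  rw [hRsq, le_div_iff₀ hβ]
  linear_combination hcubic

theorem mul_sub_sq_nonneg_of_le_sqrt {α β w : ℝ} (hα : 0 ≤ α) (hβ : 0 < β) (hw₀ : 0 ≤ w)
    (hw : w ≤ Real.sqrt (α / β)) : 0 ≤ (α - β * w ^ 2) * w := by
  have h := pow_le_pow_left₀ hw₀ hw 2
  rw [Real.sq_sqrt (by positivity), le_div_iff₀ hβ] at h
  exact mul_nonneg (by linarith) hw₀

theorem lap_eq_of_sub_eq {D n : ℕ} {f g : Site D n → ℝ} {l : Site D n}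
    (h : ∀ l', f l' - f l = g l' - g l) : lap f l = lap g l := by
  simp only [lap, h]

theorem acceleration_stage_general (D n : ℕ) (hn : 1 ≤ n)
    (α β M : ℝ) (hα : 0 < α) (hβ : 0 < β)
    (hM : 2 / (3 * Real.sqrt 3) * Real.sqrt (α ^ 3 / β) < M)
    (ε : ℝ)
    (hε : ε < M / (2 * n + 1 + 8 * n / ((1 : ℝ) / (D : ℝ)) ^ 2 + 2 * α + 8 * β))
    (T₁ T₂ : ℝ) (hT₂ : T₂ = T₁ + 2 * Real.sqrt α / (M * Real.sqrt β))
    (x v u : Site D n → ℝ → ℝ)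
    (hv₀ : ∀ l, v l T₁ = 0)
    (hlap₀ : ∀ l, |lap (fun l' => x l' T₁) l| ≤ ε)
    (hu : ∀ l t,
      u l t = -((α - β * (v l t) ^ 2) * v l t) - lap (fun l' => x l' t) l + M / 2)
    (hx : ∀ l, ∀ t ∈ Set.Icc T₁ T₂,
      HasDerivWithinAt (x l) (v l t) (Set.Icc T₁ T₂) t)
    (hveq : ∀ l, ∀ t ∈ Set.Icc T₁ T₂,
      HasDerivWithinAt (v l)
        (lap (fun l' => x l' t) l + (α - β * (v l t) ^ 2) * v l t + u l t)
        (Set.Icc T₁ T₂) t) :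
    (∀ l : Site D n, ∀ t ∈ Set.Icc T₁ T₂, v l t = M * (t - T₁) / 2) ∧
    (∀ l : Site D n, v l T₂ = Real.sqrt (α / β)) ∧
    (∀ l l' : Site D n, ∀ t ∈ Set.Icc T₁ T₂, x l' t - x l t = x l' T₁ - x l T₁) ∧
    (∀ l : Site D n, |lap (fun l' => x l' T₂) l| ≤ ε) ∧
    (∀ l : Site D n, ∀ t ∈ Set.Icc T₁ T₂, |u l t| ≤ M / 2 + ε) ∧
    M / 2 + ε < M := by
  have hM₀ : 0 < M := lt_of_le_of_lt (by positivity) hM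
  have hT₁₂ : T₁ ≤ T₂ := hT₂ ▸ le_add_of_nonneg_right (by positivity)
  have hT : M * (T₂ - T₁) / 2 = Real.sqrt (α / β) := by
    rw [hT₂, Real.sqrt_div hα.le]
    field_simp
    ring
  have hT₁I : T₁ ∈ Set.Icc T₁ T₂ := ⟨le_rfl, hT₁₂⟩
  have hT₂I : T₂ ∈ Set.Icc T₁ T₂ := ⟨hT₁₂, le_rfl⟩
  have hv : ∀ l, ∀ t ∈ Set.Icc T₁ T₂, v l t = M * (t - T₁) / 2 := by
    intro l t ht
    have hderiv : ∀ s ∈ Set.Icc T₁ T₂, HasDerivWithinAt (v l) (M / 2) (Set.Icc T₁ T₂) s :=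
      fun s hs => by convert hveq l s hs using 1; rw [hu]; ring
    rw [(convex_Icc T₁ T₂).eq_add_smul_of_hasDerivWithinAt hderiv hT₁I ht, hv₀, smul_eq_mul]
    ring
  have hdiff : ∀ l l', ∀ t ∈ Set.Icc T₁ T₂, x l' t - x l t = x l' T₁ - x l T₁ := by
    intro l l' t ht
    have hderiv : ∀ s ∈ Set.Icc T₁ T₂,
        HasDerivWithinAt (fun τ => x l' τ - x l τ) 0 (Set.Icc T₁ T₂) s := fun s hs => by
      simpa [hv l s hs, hv l' s hs] using (hx l' s hs).fun_sub (hx l s hs)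
    simpa using (convex_Icc T₁ T₂).eq_add_smul_of_hasDerivWithinAt hderiv hT₁I ht
  have hlap : ∀ l, ∀ t ∈ Set.Icc T₁ T₂, |lap (fun l' => x l' t) l| ≤ ε := fun l t ht =>
    (lap_eq_of_sub_eq fun l' => (hdiff l l' t ht).symm) ▸ hlap₀ l
  have hεM : ε < M / 2 := by
    have hn' : (1 : ℝ) ≤ n := by exact_mod_cast hn
    refine hε.trans_le (div_le_div_of_nonneg_left hM₀.le two_pos ?_)
    nlinarith [(by positivity : (0 : ℝ) ≤ 8 * n / ((1 : ℝ) / (D : ℝ)) ^ 2)]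
  refine ⟨hv, fun l => hv l T₂ hT₂I ▸ hT, hdiff, fun l => hlap l T₂ hT₂I,
    fun l t ht => ?_, by linarith⟩
  have hw₀ : 0 ≤ v l t := by rw [hv l t ht]; nlinarith [ht.1]
  have hw : v l t ≤ Real.sqrt (α / β) := by rw [hv l t ht, ← hT]; nlinarith [ht.2]
  have hfric₀ := mul_sub_sq_nonneg_of_le_sqrt hα.le hβ hw₀ hw
  have hfric : (α - β * v l t ^ 2) * v l t < M := (mul_sub_sq_le_of_nonneg hβ hw₀).trans_lt hM
  have hL := abs_le.1 (hlap l t ht)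
  rw [hu, abs_le]
  constructor <;> linarith

/-- The acceleration stage: starting from rest with small discrete Laplacian at
time `T₁`, the feedback control `u = −(α − βv²)v − Δ_D x + M/2` drives all
velocities to `v̄ = √(α/β)` at `T₂ = T₁ + 2√α/(M√β)`, keeps the discrete
gradients frozen, and is admissible with `|u| ≤ M/2 + ε < M`. -/
theorem acceleration_stage (D n : ℕ) [NeZero D] (hn : 1 ≤ n)
    (α β M : ℝ) (hα : 0 < α) (hβ : 0 < β)
    (hM : 2 / (3 * Real.sqrt 3) * Real.sqrt (α ^ 3 / β) < M)
    (ε : ℝ) (hε₀ : 0 < ε)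
    (hε : ε < M / (2 * n + 1 + 8 * n / ((1 : ℝ) / (D : ℝ)) ^ 2 + 2 * α + 8 * β))
    (T₁ T₂ : ℝ) (hT₂ : T₂ = T₁ + 2 * Real.sqrt α / (M * Real.sqrt β))
    (x v u : Site D n → ℝ → ℝ)
    (hv₀ : ∀ l, v l T₁ = 0)
    (hlap₀ : ∀ l, |lap (fun l' => x l' T₁) l| ≤ ε)
    (hu : ∀ l t,
      u l t = -((α - β * (v l t) ^ 2) * v l t) - lap (fun l' => x l' t) l + M / 2)
    (hx : ∀ l, ∀ t ∈ Set.Icc T₁ T₂,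
      HasDerivWithinAt (x l) (v l t) (Set.Icc T₁ T₂) t)
    (hveq : ∀ l, ∀ t ∈ Set.Icc T₁ T₂,
      HasDerivWithinAt (v l)
        (lap (fun l' => x l' t) l + (α - β * (v l t) ^ 2) * v l t + u l t)
        (Set.Icc T₁ T₂) t) :
    (∀ l : Site D n, ∀ t ∈ Set.Icc T₁ T₂, v l t = M * (t - T₁) / 2) ∧
    (∀ l : Site D n, v l T₂ = Real.sqrt (α / β)) ∧
    (∀ l l' : Site D n, ∀ t ∈ Set.Icc T₁ T₂, x l' t - x l t = x l' T₁ - x l T₁) ∧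
    (∀ l : Site D n, |lap (fun l' => x l' T₂) l| ≤ ε) ∧
    (∀ l : Site D n, ∀ t ∈ Set.Icc T₁ T₂, |u l t| ≤ M / 2 + ε) ∧
    M / 2 + ε < M :=
  acceleration_stage_general D n hn α β M hα hβ hM ε hε T₁ T₂ hT₂ x v u hv₀ hlap₀ hu hx hveq
end
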